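/- Let K₁, …, Kₙ be star bodies in ℝⁿ and let r be an integer with 1 ≤ r ≤ n. Then Ṽ(K₁,…,Kₙ)^r ≤ ∏_{j=1}^{r} Ṽ(K_j,…,K_j, K_{r+1},…,Kₙ), where in the j-th factor K_j occupies the first r argument slots. Equality holds if and only if K₁, …, K_r are all dilations of each other. -/

import Mathlib

/-!
Put `f_j = ρ_{K_j}` for `j ≤ r` and `w = ∏_{k > r} ρ_{K_k}`, so that both sides are integrals over
the sphere. The inequality is then Hölder's inequality `∫ (∏ f_j) w ≤ ∏ (∫ f_j^r w)^{1/r}`,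
obtained by integrating AM-GM `∏ b_j ≤ (∑ b_j^r) / r` for `b_j = f_j / (∫ f_j^r w)^{1/r}`. In case
of equality the AM-GM defect is continuous, nonnegative and has integral zero; as every nonempty
relatively open subset of the sphere has positive Hausdorff measure, the defect vanishes
identically, so the `b_j` coincide and the `f_j` are proportional.

`μH[n-1]` is finite on the sphere and charges its relatively open subsets because the sphere is
covered by finitely many graphs of `±√(1 - ‖x‖²)` over coordinate hyperplanes, restricted to caps
where they are Lipschitz, and deleting a coordinate is a 1-Lipschitz left inverse of each graph.
-/

open MeasureTheory Metric Finset

noncomputable section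

/-- The unit sphere `S^{n-1}` in `ℝⁿ`. -/
def unitSphere (n : ℕ) : Set (EuclideanSpace ℝ (Fin n)) :=
  Metric.sphere 0 1

/-- A star body, described by its radial function: a continuous, strictly
positive function on the unit sphere. -/
def IsStarBody (n : ℕ) (ρ : EuclideanSpace ℝ (Fin n) → ℝ) : Prop :=
  ContinuousOn ρ (unitSphere n) ∧ ∀ u ∈ unitSphere n, 0 < ρ u

/-- `ρL` is a dilate of `ρK`: the radial functions are positive multiples of
each other on the unit sphere. -/
def Dilates (n : ℕ) (ρK ρL : EuclideanSpace ℝ (Fin n) → ℝ) : Prop :=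
  ∃ lam : ℝ, 0 < lam ∧ ∀ u ∈ unitSphere n, ρL u = lam * ρK u

/-- The dual quermassintegral `W̃_i(K) = (1/n) ∫_{S^{n-1}} ρ_K(u)^{n-i} dS(u)`,
the integral taken with respect to `(n-1)`-dimensional Hausdorff measure. -/
def dualQuer (n i : ℕ) (ρ : EuclideanSpace ℝ (Fin n) → ℝ) : ℝ :=
  (1 / n) * ∫ u in unitSphere n, (ρ u) ^ (n - i) ∂ μH[(n : ℝ) - 1]

/-- The radial function of the mixed intersection body `I(K₁, …, K_{n-1})`:
`ρ(I(K₁,…,K_{n-1}), u) = (1/(n-1)) ∫_{S^{n-1} ∩ u^⊥} ρ_{K₁}(w)⋯ρ_{K_{n-1}}(w) dw`,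
the integral taken with respect to `(n-2)`-dimensional Hausdorff measure. -/
def mixedIntRadial (n : ℕ) (ρs : Fin (n - 1) → EuclideanSpace ℝ (Fin n) → ℝ) :
    EuclideanSpace ℝ (Fin n) → ℝ :=
  fun u => (1 / ((n : ℝ) - 1)) *
    ∫ w in unitSphere n ∩ {w | inner ℝ u w = (0 : ℝ)}, (∏ k, ρs k w) ∂ μH[(n : ℝ) - 2]

/-- The dual mixed volume
`Ṽ(K₁,…,Kₙ) = (1/n) ∫_{S^{n-1}} ρ_{K₁}(u)⋯ρ_{Kₙ}(u) dS(u)`. -/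
def dualMixedVol (n : ℕ) (K : Fin n → EuclideanSpace ℝ (Fin n) → ℝ) : ℝ :=
  (1 / n) * ∫ u in unitSphere n, (∏ k, K k u) ∂ μH[(n : ℝ) - 1]

open scoped ENNReal Topology

section AMGM

variable {ι : Type*} {s : Finset ι} {b : ι → ℝ}

lemma pow_card_rpow_inv_card (hs : s.Nonempty) (hb : ∀ i ∈ s, 0 ≤ b i) :
    ∀ i ∈ s, (b i ^ #s) ^ ((#s : ℝ)⁻¹) = b i :=
  fun i hi => Real.pow_rpow_inv_natCast (hb i hi) hs.card_pos.ne'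

lemma sum_inv_card_eq_one (hs : s.Nonempty) : ∑ _i ∈ s, (#s : ℝ)⁻¹ = 1 := by
  rw [sum_const, nsmul_eq_mul, mul_inv_cancel₀ (by exact_mod_cast hs.card_pos.ne')]

lemma prod_le_sum_pow_card_div_card (hs : s.Nonempty) (hb : ∀ i ∈ s, 0 ≤ b i) :
    ∏ i ∈ s, b i ≤ (∑ i ∈ s, b i ^ #s) / #s := by
  have := Real.geom_mean_le_arith_mean_weighted s (fun _ => (#s : ℝ)⁻¹) (fun i => b i ^ #s)
    (fun _ _ => by positivity) (sum_inv_card_eq_one hs) (fun i hi => pow_nonneg (hb i hi) _)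
  rwa [prod_congr rfl (pow_card_rpow_inv_card hs hb), ← mul_sum, inv_mul_eq_div] at this

lemma prod_eq_sum_pow_card_div_card_iff (hs : s.Nonempty) (hb : ∀ i ∈ s, 0 ≤ b i) :
    ∏ i ∈ s, b i = (∑ i ∈ s, b i ^ #s) / #s ↔ ∀ i ∈ s, ∀ j ∈ s, b i = b j := by
  have := Real.geom_mean_eq_arith_mean_weighted_iff_of_pos s (fun _ => (#s : ℝ)⁻¹)
    (fun i => b i ^ #s) (fun _ _ => by positivity) (sum_inv_card_eq_one hs)
    (fun i hi => pow_nonneg (hb i hi) _)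
  rw [prod_congr rfl (pow_card_rpow_inv_card hs hb), ← mul_sum, inv_mul_eq_div] at this
  rw [this]
  refine forall₂_congr fun i hi => forall₂_congr fun j hj => ?_
  exact pow_left_inj₀ (hb i hi) (hb j hj) hs.card_pos.ne'

end AMGM

section SupportedIntegral

variable {X : Type*} [TopologicalSpace X] [MeasurableSpace X]
  {μ : Measure X} {S : Set X} {f g : X → ℝ}

lemma ContinuousOn.eqOn_zero_of_setIntegral_eq_zero (hS : MeasurableSet S)
    (hsupp : S ⊆ (μ.restrict S).support) (hf : ContinuousOn f S) (hfi : IntegrableOn f S μ)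
    (hf0 : ∀ x ∈ S, 0 ≤ f x) (h : ∫ x in S, f x ∂μ = 0) : Set.EqOn f 0 S := by
  have hae : f =ᵐ[μ.restrict S] 0 :=
    (integral_eq_zero_iff_of_nonneg_ae ((ae_restrict_iff' hS).2 (.of_forall hf0)) hfi).1 h
  intro x hx
  by_contra! hfx
  have hpos : ∀ᶠ y in 𝓝[S] x, 0 < f y :=
    (hf x hx).eventually (lt_mem_nhds (lt_of_le_of_ne (hf0 x hx) (Ne.symm hfx)))
  obtain ⟨U, hUx, hU⟩ := mem_nhdsWithin_iff_exists_mem_nhds_inter.1 hpos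
  have hU0 : μ.restrict S U = 0 := by
    rw [measure_eq_zero_iff_ae_notMem]
    filter_upwards [ae_restrict_mem hS, hae] with y hyS hy0 hyU
    exact (hU ⟨hyU, hyS⟩).ne' hy0
  exact ((Measure.mem_support_iff_forall x).1 (hsupp hx) U hUx).ne' hU0

lemma ContinuousOn.setIntegral_pos (hS : MeasurableSet S) (hne : S.Nonempty)
    (hsupp : S ⊆ (μ.restrict S).support) (hf : ContinuousOn f S) (hfi : IntegrableOn f S μ)
    (hf0 : ∀ x ∈ S, 0 < f x) : 0 < ∫ x in S, f x ∂μ := by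
  refine (setIntegral_nonneg hS fun x hx => (hf0 x hx).le).lt_of_ne' fun h => ?_
  obtain ⟨x, hx⟩ := hne
  exact (hf0 x hx).ne' (hf.eqOn_zero_of_setIntegral_eq_zero hS hsupp hfi
    (fun x hx => (hf0 x hx).le) h hx)

lemma ContinuousOn.setIntegral_eq_iff_eqOn_of_le (hS : MeasurableSet S)
    (hsupp : S ⊆ (μ.restrict S).support) (hf : ContinuousOn f S) (hg : ContinuousOn g S)
    (hfi : IntegrableOn f S μ) (hgi : IntegrableOn g S μ) (hfg : ∀ x ∈ S, f x ≤ g x) :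
    ∫ x in S, f x ∂μ = ∫ x in S, g x ∂μ ↔ Set.EqOn f g S := by
  refine ⟨fun h x hx => ?_, fun h => setIntegral_congr_fun hS h⟩
  have := (hg.sub hf).eqOn_zero_of_setIntegral_eq_zero hS hsupp (hgi.sub hfi)
    (fun x hx => sub_nonneg.2 (hfg x hx))
    (by simp only [Pi.sub_apply]; rw [integral_sub hgi hfi, h, sub_self]) hx
  exact (sub_eq_zero.1 this).symm

end SupportedIntegral

section Normalization

variable {X ι : Type*} [MeasurableSpace X] {μ : Measure X} {S : Set X} {s : Finset ι}
  {F : ι → X → ℝ} {c : ι → ℝ} {w : X → ℝ}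

lemma setIntegral_prod_div_mul :
    ∫ x in S, (∏ i ∈ s, F i x / c i) * w x ∂μ =
      (∫ x in S, (∏ i ∈ s, F i x) * w x ∂μ) / ∏ i ∈ s, c i := by
  simp_rw [prod_div_distrib, div_mul_eq_mul_div]
  exact integral_div _ _

lemma forall_div_eq_div_iff_exists_pos_mul (hS : MeasurableSet S) (hs : s.Nonempty)
    (hc0 : ∀ i ∈ s, 0 < c i) (hc : ∀ i ∈ s, c i ^ #s = ∫ x in S, F i x ^ #s * w x ∂μ) :
    (∀ x ∈ S, ∀ i ∈ s, ∀ j ∈ s, F i x / c i = F j x / c j) ↔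
      ∀ i ∈ s, ∀ j ∈ s, ∃ a > 0, ∀ x ∈ S, F j x = a * F i x := by
  constructor
  · intro h i hi j hj
    refine ⟨c j / c i, div_pos (hc0 j hj) (hc0 i hi), fun x hx => ?_⟩
    have := h x hx i hi j hj
    rw [div_eq_div_iff (hc0 i hi).ne' (hc0 j hj).ne'] at this
    rw [div_mul_eq_mul_div, eq_div_iff (hc0 i hi).ne']
    linarith
  · intro h x hx i hi j hj
    obtain ⟨a, ha, hF⟩ := h i hi j hj
    have hcj : c j = a * c i := by
      refine (pow_left_inj₀ (hc0 j hj).le (mul_pos ha (hc0 i hi)).le hs.card_pos.ne').1 ?_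
      rw [hc j hj, mul_pow, hc i hi, ← integral_const_mul]
      refine setIntegral_congr_fun hS fun y hy => ?_
      rw [hF y hy]
      ring
    rw [hF x hx, hcj, mul_div_mul_left _ _ ha.ne']

end Normalization

section Holder

variable {X ι : Type*} [TopologicalSpace X] [T2Space X] [MeasurableSpace X]
  [OpensMeasurableSpace X] {μ : Measure X} {S : Set X} {s : Finset ι} {b F : ι → X → ℝ}
  {w : X → ℝ}

lemma ContinuousOn.integrableOn_of_isCompact {f : X → ℝ} (hS : IsCompact S) (hμS : μ S ≠ ∞)
    (hf : ContinuousOn f S) : IntegrableOn f S μ :=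
  hf.integrableOn_of_subset_isCompact hS hS.measurableSet subset_rfl hμS

lemma setIntegral_geom_mean_le_arith_mean (hS : IsCompact S) (hμS : μ S ≠ ∞) (hs : s.Nonempty)
    (hb : ∀ i ∈ s, ContinuousOn (b i) S) (hb0 : ∀ i ∈ s, ∀ x ∈ S, 0 ≤ b i x)
    (hw : ContinuousOn w S) (hw0 : ∀ x ∈ S, 0 ≤ w x) :
    ∫ x in S, (∏ i ∈ s, b i x) * w x ∂μ ≤ ∫ x in S, (∑ i ∈ s, b i x ^ #s) / #s * w x ∂μ :=
  setIntegral_mono_on (((continuousOn_finsetProd s hb).mul hw).integrableOn_of_isCompact hS hμS)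
    ((((continuousOn_finsetSum s fun i hi => (hb i hi).pow _).div_const _).mul hw
      ).integrableOn_of_isCompact hS hμS) hS.measurableSet fun x hx => mul_le_mul_of_nonneg_right
      (prod_le_sum_pow_card_div_card hs fun i hi => hb0 i hi x hx) (hw0 x hx)

lemma setIntegral_geom_mean_eq_arith_mean_iff (hS : IsCompact S) (hμS : μ S ≠ ∞)
    (hsupp : S ⊆ (μ.restrict S).support) (hs : s.Nonempty)
    (hb : ∀ i ∈ s, ContinuousOn (b i) S) (hb0 : ∀ i ∈ s, ∀ x ∈ S, 0 ≤ b i x)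
    (hw : ContinuousOn w S) (hw0 : ∀ x ∈ S, 0 < w x) :
    ∫ x in S, (∏ i ∈ s, b i x) * w x ∂μ = ∫ x in S, (∑ i ∈ s, b i x ^ #s) / #s * w x ∂μ ↔
      ∀ x ∈ S, ∀ i ∈ s, ∀ j ∈ s, b i x = b j x := by
  have hL : ContinuousOn (fun x => (∏ i ∈ s, b i x) * w x) S :=
    (continuousOn_finsetProd s hb).mul hw
  have hR : ContinuousOn (fun x => (∑ i ∈ s, b i x ^ #s) / #s * w x) S :=
    ((continuousOn_finsetSum s fun i hi => (hb i hi).pow _).div_const _).mul hw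
  rw [hL.setIntegral_eq_iff_eqOn_of_le hS.measurableSet hsupp hR
    (hL.integrableOn_of_isCompact hS hμS) (hR.integrableOn_of_isCompact hS hμS)
    fun x hx => mul_le_mul_of_nonneg_right
      (prod_le_sum_pow_card_div_card hs fun i hi => hb0 i hi x hx) (hw0 x hx).le]
  refine forall₂_congr fun x hx => ?_
  rw [mul_left_inj' (hw0 x hx).ne', prod_eq_sum_pow_card_div_card_iff hs fun i hi => hb0 i hi x hx]

lemma setIntegral_sum_div_pow_div_card_mul (hS : IsCompact S) (hμS : μ S ≠ ∞) (hs : s.Nonempty)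
    (hF : ∀ i ∈ s, ContinuousOn (F i) S) (hw : ContinuousOn w S) {c : ι → ℝ}
    (hc : ∀ i ∈ s, c i ^ #s = ∫ x in S, F i x ^ #s * w x ∂μ) (hc0 : ∀ i ∈ s, c i ≠ 0) :
    ∫ x in S, (∑ i ∈ s, (F i x / c i) ^ #s) / #s * w x ∂μ = 1 := by
  simp_rw [div_mul_eq_mul_div, sum_mul, div_pow, div_mul_eq_mul_div]
  rw [integral_div, integral_finsetSum _ fun i hi => (((hF i hi).pow _).mul hw
    |>.integrableOn_of_isCompact (f := fun x => F i x ^ #s * w x) hS hμS).div_const (c i ^ #s)]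
  rw [sum_congr rfl fun i hi => by
    rw [integral_div, ← hc i hi, div_self (pow_ne_zero _ (hc0 i hi))]]
  rw [sum_const, nsmul_one, div_self (by exact_mod_cast hs.card_pos.ne')]

lemma exists_pos_pow_card_eq_setIntegral (hS : IsCompact S) (hμS : μ S ≠ ∞)
    (hsupp : S ⊆ (μ.restrict S).support) (hne : S.Nonempty) (hs : s.Nonempty)
    (hF : ∀ i ∈ s, ContinuousOn (F i) S) (hF0 : ∀ i ∈ s, ∀ x ∈ S, 0 < F i x)
    (hw : ContinuousOn w S) (hw0 : ∀ x ∈ S, 0 < w x) :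
    ∃ c : ι → ℝ, (∀ i ∈ s, 0 < c i) ∧ ∀ i ∈ s, c i ^ #s = ∫ x in S, F i x ^ #s * w x ∂μ := by
  have hI : ∀ i ∈ s, 0 < ∫ x in S, F i x ^ #s * w x ∂μ := fun i hi =>
    have hcont := ((hF i hi).pow #s).mul hw
    hcont.setIntegral_pos hS.measurableSet hne hsupp (hcont.integrableOn_of_isCompact hS hμS)
      fun x hx => mul_pos (pow_pos (hF0 i hi x hx) _) (hw0 x hx)
  exact ⟨fun i => (∫ x in S, F i x ^ #s * w x ∂μ) ^ ((#s : ℝ)⁻¹),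
    fun i hi => Real.rpow_pos_of_pos (hI i hi) _,
    fun i hi => Real.rpow_inv_natCast_pow (hI i hi).le hs.card_pos.ne'⟩

theorem setIntegral_prod_mul_pow_card_le (hS : IsCompact S) (hμS : μ S ≠ ∞)
    (hsupp : S ⊆ (μ.restrict S).support) (hne : S.Nonempty) (hs : s.Nonempty)
    (hF : ∀ i ∈ s, ContinuousOn (F i) S) (hF0 : ∀ i ∈ s, ∀ x ∈ S, 0 < F i x)
    (hw : ContinuousOn w S) (hw0 : ∀ x ∈ S, 0 < w x) :
    (∫ x in S, (∏ i ∈ s, F i x) * w x ∂μ) ^ #s ≤ ∏ i ∈ s, ∫ x in S, F i x ^ #s * w x ∂μ := by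
  obtain ⟨c, hc0, hc⟩ := exists_pos_pow_card_eq_setIntegral hS hμS hsupp hne hs hF hF0 hw hw0
  have hamgm := setIntegral_geom_mean_le_arith_mean (μ := μ) (b := fun i x => F i x / c i) hS hμS
    hs (fun i hi => (hF i hi).div_const _)
    (fun i hi x hx => div_nonneg (hF0 i hi x hx).le (hc0 i hi).le) hw fun x hx => (hw0 x hx).le
  rw [setIntegral_prod_div_mul, setIntegral_sum_div_pow_div_card_mul hS hμS hs hF hw hc
    fun i hi => (hc0 i hi).ne', div_le_one (prod_pos hc0)] at hamgm
  calc _ ≤ (∏ i ∈ s, c i) ^ #s := pow_le_pow_left₀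
          (setIntegral_nonneg hS.measurableSet fun x hx =>
            mul_nonneg (prod_nonneg fun i hi => (hF0 i hi x hx).le) (hw0 x hx).le) hamgm _
    _ = _ := by rw [← prod_pow]; exact prod_congr rfl hc

theorem setIntegral_prod_mul_pow_card_eq_iff (hS : IsCompact S) (hμS : μ S ≠ ∞)
    (hsupp : S ⊆ (μ.restrict S).support) (hne : S.Nonempty) (hs : s.Nonempty)
    (hF : ∀ i ∈ s, ContinuousOn (F i) S) (hF0 : ∀ i ∈ s, ∀ x ∈ S, 0 < F i x)
    (hw : ContinuousOn w S) (hw0 : ∀ x ∈ S, 0 < w x) :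
    (∫ x in S, (∏ i ∈ s, F i x) * w x ∂μ) ^ #s = ∏ i ∈ s, ∫ x in S, F i x ^ #s * w x ∂μ ↔
      ∀ i ∈ s, ∀ j ∈ s, ∃ a > 0, ∀ x ∈ S, F j x = a * F i x := by
  obtain ⟨c, hc0, hc⟩ := exists_pos_pow_card_eq_setIntegral hS hμS hsupp hne hs hF hF0 hw hw0
  have hC : 0 < ∏ i ∈ s, c i := prod_pos hc0
  have hJ : 0 ≤ ∫ x in S, (∏ i ∈ s, F i x) * w x ∂μ := setIntegral_nonneg hS.measurableSet
    fun x hx => mul_nonneg (prod_nonneg fun i hi => (hF0 i hi x hx).le) (hw0 x hx).le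
  rw [← prod_congr rfl hc, prod_pow, pow_left_inj₀ hJ hC.le hs.card_pos.ne',
    ← div_eq_one_iff_eq hC.ne', ← setIntegral_prod_div_mul,
    ← setIntegral_sum_div_pow_div_card_mul hS hμS hs hF hw hc fun i hi => (hc0 i hi).ne',
    setIntegral_geom_mean_eq_arith_mean_iff hS hμS hsupp hs (fun i hi => (hF i hi).div_const _)
      (fun i hi x hx => div_nonneg (hF0 i hi x hx).le (hc0 i hi).le) hw hw0]
  exact forall_div_eq_div_iff_exists_pos_mul hS.measurableSet hs hc0 hc

end Holder

lemma abs_sqrt_one_sub_sq_sub_le {a b c : ℝ} (hc : 0 < c) (ha0 : 0 ≤ a) (hb0 : 0 ≤ b)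
    (ha : c ≤ 1 - a ^ 2) (hb : c ≤ 1 - b ^ 2) :
    |√(1 - a ^ 2) - √(1 - b ^ 2)| ≤ |a - b| / √c := by
  have hsa := Real.sqrt_le_sqrt ha
  have hsb := Real.sqrt_le_sqrt hb
  have hab : a + b ≤ 2 := by nlinarith [sq_nonneg (a - 1), sq_nonneg (b - 1)]
  have hdiff : (√(1 - a ^ 2) - √(1 - b ^ 2)) * (√(1 - a ^ 2) + √(1 - b ^ 2)) =
      -((a - b) * (a + b)) := by
    linear_combination Real.sq_sqrt (hc.le.trans ha) - Real.sq_sqrt (hc.le.trans hb)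
  rw [le_div_iff₀ (Real.sqrt_pos.2 hc)]
  refine le_of_mul_le_mul_right ?_ two_pos
  calc |√(1 - a ^ 2) - √(1 - b ^ 2)| * √c * 2
      ≤ |√(1 - a ^ 2) - √(1 - b ^ 2)| * (√(1 - a ^ 2) + √(1 - b ^ 2)) := by
        rw [mul_assoc]; gcongr; linarith
    _ = |a - b| * (a + b) := by
        rw [← abs_of_nonneg (by positivity : 0 ≤ √(1 - a ^ 2) + √(1 - b ^ 2)), ← abs_mul, hdiff,
          abs_neg, abs_mul, abs_of_nonneg (by positivity : 0 ≤ a + b)]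
    _ ≤ |a - b| * 2 := by gcongr

section SphereCharts

variable {m : ℕ}

def sphereGraph (i : Fin (m + 1)) (ε : ℝ) (x : EuclideanSpace ℝ (Fin m)) :
    EuclideanSpace ℝ (Fin (m + 1)) :=
  WithLp.toLp 2 (i.insertNth (ε * √(1 - ‖x‖ ^ 2)) x.ofLp)

def deleteCoord (i : Fin (m + 1)) (u : EuclideanSpace ℝ (Fin (m + 1))) :
    EuclideanSpace ℝ (Fin m) :=
  WithLp.toLp 2 fun j => u (i.succAbove j)

lemma sphereGraph_apply_self (i : Fin (m + 1)) (ε : ℝ) (x : EuclideanSpace ℝ (Fin m)) :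
    sphereGraph i ε x i = ε * √(1 - ‖x‖ ^ 2) := by
  simp [sphereGraph]

lemma deleteCoord_sphereGraph (i : Fin (m + 1)) (ε : ℝ) (x : EuclideanSpace ℝ (Fin m)) :
    deleteCoord i (sphereGraph i ε x) = x := by
  ext j
  simp [sphereGraph, deleteCoord]

lemma norm_sq_eq_sq_add_norm_deleteCoord_sq (i : Fin (m + 1))
    (u : EuclideanSpace ℝ (Fin (m + 1))) : ‖u‖ ^ 2 = u i ^ 2 + ‖deleteCoord i u‖ ^ 2 := by
  simp only [EuclideanSpace.real_norm_sq_eq, Fin.sum_univ_succAbove _ i]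
  rfl

lemma dist_sq_eq_sq_add_dist_deleteCoord_sq (i : Fin (m + 1))
    (u v : EuclideanSpace ℝ (Fin (m + 1))) :
    dist u v ^ 2 = (u i - v i) ^ 2 + dist (deleteCoord i u) (deleteCoord i v) ^ 2 := by
  rw [dist_eq_norm, dist_eq_norm, norm_sq_eq_sq_add_norm_deleteCoord_sq i]
  rfl

lemma dist_le_abs_add_dist_deleteCoord (i : Fin (m + 1)) (u v : EuclideanSpace ℝ (Fin (m + 1))) :
    dist u v ≤ |u i - v i| + dist (deleteCoord i u) (deleteCoord i v) := by
  refine le_of_sq_le_sq ?_ (by positivity)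
  rw [dist_sq_eq_sq_add_dist_deleteCoord_sq i, add_sq, sq_abs]
  nlinarith [abs_nonneg (u i - v i), dist_nonneg (x := deleteCoord i u) (y := deleteCoord i v)]

lemma lipschitzWith_deleteCoord (i : Fin (m + 1)) : LipschitzWith 1 (deleteCoord i) :=
  LipschitzWith.of_dist_le_mul fun u v => by
    rw [NNReal.coe_one, one_mul]
    refine le_of_sq_le_sq ?_ dist_nonneg
    rw [dist_sq_eq_sq_add_dist_deleteCoord_sq i u v]
    nlinarith [sq_nonneg (u i - v i)]

lemma continuous_sphereGraph (i : Fin (m + 1)) (ε : ℝ) : Continuous (sphereGraph i ε) :=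
  (PiLp.continuous_toLp 2 _).comp <|
    (continuous_const.mul (continuous_const.sub (continuous_norm.pow 2)).sqrt).finInsertNth i
      (PiLp.continuous_ofLp 2 _)

lemma norm_sphereGraph {ε : ℝ} (hε : |ε| = 1) {x : EuclideanSpace ℝ (Fin m)} (hx : ‖x‖ ≤ 1)
    (i : Fin (m + 1)) : ‖sphereGraph i ε x‖ = 1 := by
  have h := norm_sq_eq_sq_add_norm_deleteCoord_sq i (sphereGraph i ε x)
  rw [sphereGraph_apply_self, deleteCoord_sphereGraph, mul_pow, ← sq_abs ε, hε,
    Real.sq_sqrt (by nlinarith [norm_nonneg x])] at h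
  nlinarith [norm_nonneg (sphereGraph i ε x)]

lemma sphereGraph_deleteCoord {u : EuclideanSpace ℝ (Fin (m + 1))} (hu : ‖u‖ = 1)
    {i : Fin (m + 1)} {ε : ℝ} (hε : ε * |u i| = u i) : sphereGraph i ε (deleteCoord i u) = u := by
  have h := norm_sq_eq_sq_add_norm_deleteCoord_sq i u
  ext j
  rcases Fin.eq_self_or_eq_succAbove i j with rfl | ⟨j, rfl⟩
  · rw [sphereGraph_apply_self, show 1 - ‖deleteCoord j u‖ ^ 2 = u j ^ 2 by rw [hu] at h; linarith,
      Real.sqrt_sq_eq_abs, hε]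
  · simp [sphereGraph, deleteCoord]

end SphereCharts

lemma isCompact_unitSphere (n : ℕ) : IsCompact (unitSphere n) :=
  isCompact_sphere 0 1

lemma measurableSet_unitSphere (n : ℕ) : MeasurableSet (unitSphere n) :=
  isClosed_sphere.measurableSet

section SphereMeasure

variable {m : ℕ}

lemma lipschitzOnWith_sphereGraph (i : Fin (m + 1)) {ε : ℝ} (hε : |ε| = 1) {c : ℝ} (hc : 0 < c) :
    LipschitzOnWith (Real.toNNReal ((√c)⁻¹ + 1)) (sphereGraph i ε) {x | c ≤ 1 - ‖x‖ ^ 2} := by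
  refine LipschitzOnWith.of_dist_le_mul fun x hx y hy => ?_
  rw [Real.coe_toNNReal _ (by positivity), add_mul, one_mul, ← div_eq_inv_mul]
  refine (dist_le_abs_add_dist_deleteCoord i _ _).trans (add_le_add ?_ ?_)
  · rw [sphereGraph_apply_self, sphereGraph_apply_self, ← mul_sub, abs_mul, hε, one_mul]
    exact (abs_sqrt_one_sub_sq_sub_le hc (norm_nonneg x) (norm_nonneg y) hx hy).trans
      (div_le_div_of_nonneg_right (abs_norm_sub_norm_le x y) (Real.sqrt_nonneg c))
  · rw [deleteCoord_sphereGraph, deleteCoord_sphereGraph]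

lemma exists_inv_le_sq_apply {u : EuclideanSpace ℝ (Fin (m + 1))} (hu : ‖u‖ = 1) :
    ∃ i, ((m : ℝ) + 1)⁻¹ ≤ u i ^ 2 := by
  have hsum : ∑ _i : Fin (m + 1), ((m : ℝ) + 1)⁻¹ ≤ ∑ i, u i ^ 2 := by
    rw [← EuclideanSpace.real_norm_sq_eq, hu, sum_const, card_univ, Fintype.card_fin,
      nsmul_eq_mul]
    push_cast
    rw [mul_inv_cancel₀ (by positivity), one_pow]
  obtain ⟨i, -, hi⟩ := exists_le_of_sum_le univ_nonempty hsum
  exact ⟨i, hi⟩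

lemma exists_sphereGraph_deleteCoord_eq {u : EuclideanSpace ℝ (Fin (m + 1))} (hu : ‖u‖ = 1) :
    ∃ i ε, |ε| = 1 ∧ ((m : ℝ) + 1)⁻¹ ≤ 1 - ‖deleteCoord i u‖ ^ 2 ∧
      sphereGraph i ε (deleteCoord i u) = u := by
  obtain ⟨i, hi⟩ := exists_inv_le_sq_apply hu
  have hnorm := norm_sq_eq_sq_add_norm_deleteCoord_sq i u
  rw [hu, one_pow] at hnorm
  obtain ⟨ε, hε, hεu⟩ : ∃ ε : ℝ, |ε| = 1 ∧ ε * |u i| = u i := by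
    rcases le_or_gt 0 (u i) with h | h
    · exact ⟨1, abs_one, by rw [one_mul, abs_of_nonneg h]⟩
    · exact ⟨-1, by norm_num, by rw [abs_of_neg h]; ring⟩
  exact ⟨i, ε, hε, by linarith, sphereGraph_deleteCoord hu hεu⟩

lemma unitSphere_subset_iUnion_sphereGraph :
    unitSphere (m + 1) ⊆ ⋃ p ∈ (Set.univ ×ˢ {1, -1} : Set (Fin (m + 1) × ℝ)),
      sphereGraph p.1 p.2 '' {x | ((m : ℝ) + 1)⁻¹ ≤ 1 - ‖x‖ ^ 2} := by
  intro u hu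
  obtain ⟨i, ε, hε, hx, hεu⟩ := exists_sphereGraph_deleteCoord_eq (mem_sphere_zero_iff_norm.1 hu)
  exact Set.mem_biUnion (x := (i, ε)) ⟨Set.mem_univ i, (abs_eq zero_le_one).1 hε⟩ ⟨_, hx, hεu⟩

lemma hausdorffMeasure_unitSphere_lt_top : μH[(m : ℝ)] (unitSphere (m + 1)) < ∞ := by
  refine (measure_mono unitSphere_subset_iUnion_sphereGraph).trans_lt <|
    measure_biUnion_lt_top (Set.finite_univ.prod (Set.toFinite _)) fun p hp => ?_
  have hD : {x : EuclideanSpace ℝ (Fin m) | ((m : ℝ) + 1)⁻¹ ≤ 1 - ‖x‖ ^ 2} ⊆ closedBall 0 1 :=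
    fun x hx => by
      have : 0 < ((m : ℝ) + 1)⁻¹ := by positivity
      simp only [mem_closedBall_zero_iff]
      nlinarith [norm_nonneg x, hx.out]
  have hlip := lipschitzOnWith_sphereGraph p.1 ((abs_eq zero_le_one).2 hp.2)
    (by positivity : 0 < ((m : ℝ) + 1)⁻¹)
  refine (hlip.hausdorffMeasure_image_le (Nat.cast_nonneg m)).trans_lt
    (ENNReal.mul_lt_top (by simp) ?_)
  exact (measure_mono hD).trans_lt (isCompact_closedBall 0 1).measure_lt_top

lemma unitSphere_subset_support_restrict :
    unitSphere (m + 1) ⊆ ((μH[(m : ℝ)] : Measure (EuclideanSpace ℝ (Fin (m + 1)))).restrict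
      (unitSphere (m + 1))).support := by
  intro u hu
  rw [Measure.mem_support_iff_forall]
  intro U hU
  rw [Measure.restrict_apply' (measurableSet_unitSphere (m + 1))]
  obtain ⟨i, ε, hε, hx, hεu⟩ := exists_sphereGraph_deleteCoord_eq (mem_sphere_zero_iff_norm.1 hu)
  have hx1 : ‖deleteCoord i u‖ < 1 := by
    have : (0 : ℝ) < ((m : ℝ) + 1)⁻¹ := by positivity
    nlinarith [norm_nonneg (deleteCoord i u)]
  set V := sphereGraph i ε ⁻¹' U ∩ ball 0 1
  have hV : V ∈ 𝓝 (deleteCoord i u) := Filter.inter_mem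
    ((continuous_sphereGraph i ε).continuousAt.preimage_mem_nhds
      (by rwa [hεu]))
    (isOpen_ball.mem_nhds (mem_ball_zero_iff.2 hx1))
  have himage : sphereGraph i ε '' V ⊆ U ∩ unitSphere (m + 1) := by
    rintro _ ⟨x, hxV, rfl⟩
    exact ⟨hxV.1, mem_sphere_zero_iff_norm.2
      (norm_sphereGraph hε (mem_ball_zero_iff.1 hxV.2).le i)⟩
  calc 0 < μH[(m : ℝ)] V := Measure.measure_pos_of_mem_nhds _ hV
    _ = μH[(m : ℝ)] (deleteCoord i '' (sphereGraph i ε '' V)) := by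
        rw [Set.image_image]; simp [deleteCoord_sphereGraph]
    _ ≤ μH[(m : ℝ)] (sphereGraph i ε '' V) := by
        simpa using (lipschitzWith_deleteCoord i).hausdorffMeasure_image_le (Nat.cast_nonneg m) _
    _ ≤ _ := measure_mono himage

end SphereMeasure

lemma unitSphere_nonempty (m : ℕ) : (unitSphere (m + 1)).Nonempty :=
  ⟨EuclideanSpace.single 0 1, by simp [unitSphere]⟩

lemma dualMixedVol_succ (m : ℕ) (K : Fin (m + 1) → EuclideanSpace ℝ (Fin (m + 1)) → ℝ) :
    dualMixedVol (m + 1) K =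
      ((m : ℝ) + 1)⁻¹ * ∫ u in unitSphere (m + 1), ∏ k, K k u ∂μH[(m : ℝ)] := by
  rw [dualMixedVol]
  push_cast
  rw [add_sub_cancel_right, one_div]

lemma dualMixedVol_eq_setIntegral_prod_filter_mul (m r : ℕ)
    (K : Fin (m + 1) → EuclideanSpace ℝ (Fin (m + 1)) → ℝ) :
    dualMixedVol (m + 1) K = ((m : ℝ) + 1)⁻¹ * ∫ u in unitSphere (m + 1),
      (∏ j ∈ univ.filter fun j : Fin (m + 1) => (j : ℕ) < r, K j u) *
        ∏ k ∈ univ.filter (fun k : Fin (m + 1) => ¬ (k : ℕ) < r), K k u ∂μH[(m : ℝ)] := by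
  simp_rw [dualMixedVol_succ, prod_filter_mul_prod_filter_not]

lemma dualMixedVol_ite_eq_setIntegral_pow_mul (m r : ℕ)
    (K : Fin (m + 1) → EuclideanSpace ℝ (Fin (m + 1)) → ℝ) (j : Fin (m + 1)) :
    dualMixedVol (m + 1) (fun k => if (k : ℕ) < r then K j else K k) =
      ((m : ℝ) + 1)⁻¹ * ∫ u in unitSphere (m + 1),
        K j u ^ #(univ.filter fun j : Fin (m + 1) => (j : ℕ) < r) *
          ∏ k ∈ univ.filter (fun k : Fin (m + 1) => ¬ (k : ℕ) < r), K k u ∂μH[(m : ℝ)] := by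
  simp_rw [dualMixedVol_succ, ite_apply, prod_ite, prod_const]

theorem dualMixedVol_alexandrov_fenchel_general (n : ℕ)
    (K : Fin n → EuclideanSpace ℝ (Fin n) → ℝ) (hK : ∀ k, IsStarBody n (K k))
    (r : ℕ) (hr1 : 1 ≤ r) (hr2 : r ≤ n) :
    dualMixedVol n K ^ r ≤
      (∏ j ∈ Finset.univ.filter (fun j : Fin n => (j : ℕ) < r),
        dualMixedVol n (fun k => if (k : ℕ) < r then K j else K k)) ∧
    (dualMixedVol n K ^ r =
      (∏ j ∈ Finset.univ.filter (fun j : Fin n => (j : ℕ) < r),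
        dualMixedVol n (fun k => if (k : ℕ) < r then K j else K k)) ↔
      ∀ j j' : Fin n, (j : ℕ) < r → (j' : ℕ) < r → Dilates n (K j) (K j')) := by
  obtain ⟨m, rfl⟩ : ∃ m, n = m + 1 := ⟨n - 1, by omega⟩
  set t := univ.filter fun j : Fin (m + 1) => (j : ℕ) < r
  set g := fun u => ∏ k ∈ univ.filter (fun k : Fin (m + 1) => ¬ (k : ℕ) < r), K k u
  have ht : #t = r := by simp [t, Fin.card_filter_val_lt, hr2]
  have ht0 : t.Nonempty := card_pos.1 (by omega)
  have hg : ContinuousOn g (unitSphere (m + 1)) := continuousOn_finsetProd _ fun k _ => (hK k).1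
  have hg0 : ∀ u ∈ unitSphere (m + 1), 0 < g u := fun u hu => prod_pos fun k _ => (hK k).2 u hu
  have hle := setIntegral_prod_mul_pow_card_le (isCompact_unitSphere _)
    hausdorffMeasure_unitSphere_lt_top.ne unitSphere_subset_support_restrict (unitSphere_nonempty m)
    ht0 (fun k _ => (hK k).1) (fun k _ => (hK k).2) hg hg0
  have heq := setIntegral_prod_mul_pow_card_eq_iff (isCompact_unitSphere _)
    hausdorffMeasure_unitSphere_lt_top.ne unitSphere_subset_support_restrict (unitSphere_nonempty m)
    ht0 (fun k _ => (hK k).1) (fun k _ => (hK k).2) hg hg0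
  rw [ht] at hle heq
  rw [dualMixedVol_eq_setIntegral_prod_filter_mul m r,
    prod_congr rfl fun j _ => dualMixedVol_ite_eq_setIntegral_pow_mul m r K j,
    prod_mul_distrib, prod_const, mul_pow, ht]
  refine ⟨mul_le_mul_of_nonneg_left hle (by positivity), ?_⟩
  rw [mul_right_inj' (by positivity), heq]
  simp only [t, mem_filter, mem_univ, true_and, Dilates, gt_iff_lt]
  exact ⟨fun h j j' hj hj' => h j hj j' hj', fun h j hj j' hj' => h j j' hj hj'⟩

/-- **Lemma B** (dual Aleksandrov–Fenchel inequality for dual mixed volumes).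
If `K₁, …, Kₙ` are star bodies in `ℝⁿ` and `1 ≤ r ≤ n`, then
`Ṽ(K₁,…,Kₙ)^r ≤ ∏_{j=1}^r Ṽ(K_j,…,K_j,K_{r+1},…,Kₙ)`, with equality iff
`K₁, …, K_r` are all dilations of each other. -/
theorem dualMixedVol_alexandrov_fenchel (n : ℕ) (hn : 3 ≤ n)
    (K : Fin n → EuclideanSpace ℝ (Fin n) → ℝ) (hK : ∀ k, IsStarBody n (K k))
    (r : ℕ) (hr1 : 1 ≤ r) (hr2 : r ≤ n) :
    dualMixedVol n K ^ r ≤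
      (∏ j ∈ Finset.univ.filter (fun j : Fin n => (j : ℕ) < r),
        dualMixedVol n (fun k => if (k : ℕ) < r then K j else K k)) ∧
    (dualMixedVol n K ^ r =
      (∏ j ∈ Finset.univ.filter (fun j : Fin n => (j : ℕ) < r),
        dualMixedVol n (fun k => if (k : ℕ) < r then K j else K k)) ↔
      ∀ j j' : Fin n, (j : ℕ) < r → (j' : ℕ) < r → Dilates n (K j) (K j')) :=
  dualMixedVol_alexandrov_fenchel_general n K hK r hr1 hr2
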